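/- Define f(x) = (2/3)x·g(x) where g(x) = (2/3 − 2π/(9√3))x² − (8/3)x + 2π/√3 for 0 ≤ x ≤ 1; g(x) = −(4/√3)(2x²/3 + 1)·arcsin(√3/(2x)) + (2π/(3√3))x² − 2√(4x²−3) + 10π/(3√3) for 1 ≤ x ≤ √3; g(x) = (4/√3)(x²/3 + 4)·arcsin(√3/x) − (4π/(9√3) + 2/3)x² + (20/3)√(x²−3) − 16π/(3√3) − 4 for √3 ≤ x ≤ 2. Define F(d) = (1/3)(1/3 − π/(9√3))d⁴ − (16/27)d³ + (2π/(3√3))d² for 0 ≤ d ≤ 1; F(d) = −(4/(3√3))(d⁴/3 + d²)·arcsin(√3/(2d)) + (π/(9√3))d⁴ + (10π/(9√3))d² − ((26d² + 3)/54)√(4d²−3) + 1/18 for 1 ≤ d ≤ √3; F(d) = (2/(3√3))(d⁴/3 + 8d²)·arcsin(√3/d) − (2π/(27√3) + 1/9)d⁴ − (16π/(9√3) + 4/3)d² + ((14d² + 12)/9)√(d²−3) + 5/9 for √3 ≤ d ≤ 2. Then for every d with 0 ≤ d ≤ 2, the integral ∫₀^d f(x) dx equals F(d); in particular ∫₀^2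 f(x) dx = 1. -/

import Mathlib

/-!
On each of `[0, 1]`, `[1, √3]`, `[√3, 2]` the branch of `FHI` is an antiderivative of the branch
of `fHI`: differentiating `arcsin (√3 / (k d))` produces a multiple of `1 / √(k² d² - 3)`, which
combines with the derivative of the square-root term. The branches of `gHI` and of `FHI` agree
at the break points `1` and `√3` (by `arcsin (√3 / 2) = π / 3`, `arcsin (1 / 2) = π / 6`,
`arcsin 1 = π / 2`), so `FHI` is continuous on `[0, 2]` and differentiates to the continuous
function `fHI` off `{1, √3}`. The fundamental theorem of calculus with a countable exceptional
set, together with `FHI 0 = 0` and `FHI 2 = 1`, gives the claim.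
-/

open MeasureTheory Real Set

noncomputable section

def gHI (d : ℝ) : ℝ :=
  if d < 0 then 0
  else if d ≤ 1 then
    (2/3 - 2*π/(9*Real.sqrt 3)) * d^2 - (8/3)*d + 2*π/Real.sqrt 3
  else if d ≤ Real.sqrt 3 then
    -(4/Real.sqrt 3) * (2*d^2/3 + 1) * arcsin (Real.sqrt 3/(2*d))
      + (2*π/(3*Real.sqrt 3)) * d^2 - 2 * Real.sqrt (4*d^2 - 3) + 10*π/(3*Real.sqrt 3)
  else if d ≤ 2 then
    (4/Real.sqrt 3) * (d^2/3 + 4) * arcsin (Real.sqrt 3/d)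
      - (4*π/(9*Real.sqrt 3) + 2/3) * d^2 + (20/3) * Real.sqrt (d^2 - 3)
      - 16*π/(3*Real.sqrt 3) - 4
  else 0

/-- f_{H_I}(d) = (2/3)d·g(d). -/
def fHI (d : ℝ) : ℝ := (2/3) * d * gHI d

def FHI (d : ℝ) : ℝ :=
  if d ≤ 1 then
    (1/3) * (1/3 - π/(9*Real.sqrt 3)) * d^4 - (16/27)*d^3 + (2*π/(3*Real.sqrt 3)) * d^2
  else if d ≤ Real.sqrt 3 then
    -(4/(3*Real.sqrt 3)) * (d^4/3 + d^2) * arcsin (Real.sqrt 3/(2*d))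
      + (π/(9*Real.sqrt 3)) * d^4 + (10*π/(9*Real.sqrt 3)) * d^2
      - ((26*d^2 + 3)/54) * Real.sqrt (4*d^2 - 3) + 1/18
  else
    (2/(3*Real.sqrt 3)) * (d^4/3 + 8*d^2) * arcsin (Real.sqrt 3/d)
      - (2*π/(27*Real.sqrt 3) + 1/9) * d^4 - (16*π/(9*Real.sqrt 3) + 4/3) * d^2
      + ((14*d^2 + 12)/9) * Real.sqrt (d^2 - 3) + 5/9

theorem HasDerivAt.arcsin {f : ℝ → ℝ} {f' x : ℝ} (hf : HasDerivAt f f' x)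
    (h₁ : f x ≠ -1) (h₂ : f x ≠ 1) :
    HasDerivAt (fun y => arcsin (f y)) (1 / √(1 - f x ^ 2) * f') x :=
  (hasDerivAt_arcsin h₁ h₂).comp x hf

theorem hasDerivAt_arcsin_div {c x : ℝ} (hc : 0 < c) (hx : c < x) :
    HasDerivAt (fun y => arcsin (c / y)) (-c / (x * √(x ^ 2 - c ^ 2))) x := by
  have hx0 : 0 < x := hc.trans hx
  refine (((hasDerivAt_const x c).fun_div (hasDerivAt_id' x) hx0.ne').arcsin
    (by linarith [div_pos hc hx0]) ((div_lt_one hx0).2 hx).ne).congr_deriv ?_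
  rw [show 1 - (c / x) ^ 2 = (x ^ 2 - c ^ 2) / x ^ 2 by field_simp, sqrt_div' _ (sq_nonneg x),
    sqrt_sq hx0.le]
  field_simp
  ring

theorem Real.arcsin_sqrt_three_div_two : arcsin (√3 / 2) = π / 3 := by
  rw [← sin_pi_div_three, arcsin_sin] <;> linarith [pi_pos]

theorem Real.arcsin_one_half : arcsin (1 / 2) = π / 6 := by
  rw [← sin_pi_div_six, arcsin_sin] <;> linarith [pi_pos]

theorem ContinuousOn.Icc_union_Icc {α β : Type*} [LinearOrder α] [TopologicalSpace α]
    [OrderClosedTopology α] [TopologicalSpace β] {f : α → β} {a b c : α}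
    (h₁ : ContinuousOn f (Icc a b)) (h₂ : ContinuousOn f (Icc b c)) (hab : a ≤ b) (hbc : b ≤ c) :
    ContinuousOn f (Icc a c) :=
  Icc_union_Icc_eq_Icc hab hbc ▸ h₁.union_of_isClosed h₂ isClosed_Icc isClosed_Icc

namespace HexagonDistance

theorem one_lt_sqrt_three : 1 < √3 := by
  rw [lt_sqrt zero_le_one]; norm_num

theorem sqrt_three_lt_two : √3 < 2 := by
  rw [sqrt_lt' two_pos]; norm_num

def g₁ (d : ℝ) : ℝ := (2/3 - 2*π/(9*√3)) * d^2 - (8/3)*d + 2*π/√3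

def g₂ (d : ℝ) : ℝ :=
  -(4/√3) * (2*d^2/3 + 1) * arcsin (√3/(2*d))
    + (2*π/(3*√3)) * d^2 - 2 * √(4*d^2 - 3) + 10*π/(3*√3)

def g₃ (d : ℝ) : ℝ :=
  (4/√3) * (d^2/3 + 4) * arcsin (√3/d)
    - (4*π/(9*√3) + 2/3) * d^2 + (20/3) * √(d^2 - 3) - 16*π/(3*√3) - 4

def F₁ (d : ℝ) : ℝ :=
  (1/3) * (1/3 - π/(9*√3)) * d^4 - (16/27)*d^3 + (2*π/(3*√3)) * d^2

def F₂ (d : ℝ) : ℝ :=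
  -(4/(3*√3)) * (d^4/3 + d^2) * arcsin (√3/(2*d))
    + (π/(9*√3)) * d^4 + (10*π/(9*√3)) * d^2
    - ((26*d^2 + 3)/54) * √(4*d^2 - 3) + 1/18

def F₃ (d : ℝ) : ℝ :=
  (2/(3*√3)) * (d^4/3 + 8*d^2) * arcsin (√3/d)
    - (2*π/(27*√3) + 1/9) * d^4 - (16*π/(9*√3) + 4/3) * d^2
    + ((14*d^2 + 12)/9) * √(d^2 - 3) + 5/9

theorem g₁_one_eq_g₂_one : g₁ 1 = g₂ 1 := by
  norm_num [g₁, g₂, arcsin_sqrt_three_div_two]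
  field_simp
  ring

theorem g₂_sqrt_three_eq_g₃_sqrt_three : g₂ √3 = g₃ √3 := by
  have h : √3 / (2 * √3) = 1 / 2 := by field_simp
  norm_num [g₂, g₃, h, arcsin_one_half]
  field_simp
  ring

theorem F₁_zero : F₁ 0 = 0 := by
  simp [F₁]

theorem F₁_one_eq_F₂_one : F₁ 1 = F₂ 1 := by
  norm_num [F₁, F₂, arcsin_sqrt_three_div_two]
  field_simp
  ring

theorem F₂_sqrt_three_eq_F₃_sqrt_three : F₂ √3 = F₃ √3 := by
  have h : √3 / (2 * √3) = 1 / 2 := by field_simp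
  have h4 : √3 ^ 4 = 9 := by rw [show 4 = 2 * 2 by rfl, pow_mul]; norm_num
  norm_num [F₂, F₃, h, h4, arcsin_one_half]
  field_simp
  ring

theorem F₃_two : F₃ 2 = 1 := by
  norm_num [F₃, arcsin_sqrt_three_div_two]
  field_simp
  ring

theorem eqOn_gHI_g₁ : EqOn gHI g₁ (Icc 0 1) := by
  rintro x ⟨h0, h1⟩
  rw [gHI, if_neg h0.not_gt, if_pos h1, g₁]

theorem eqOn_gHI_g₂ : EqOn gHI g₂ (Icc 1 √3) := by
  rintro x ⟨h1, h2⟩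
  obtain rfl | h1 := h1.eq_or_lt
  · exact (eqOn_gHI_g₁ ⟨zero_le_one, le_rfl⟩).trans g₁_one_eq_g₂_one
  · rw [gHI, if_neg (by linarith), if_neg h1.not_ge, if_pos h2, g₂]

theorem eqOn_gHI_g₃ : EqOn gHI g₃ (Icc √3 2) := by
  rintro x ⟨h2, h3⟩
  obtain rfl | h2 := h2.eq_or_lt
  · exact (eqOn_gHI_g₂ ⟨one_lt_sqrt_three.le, le_rfl⟩).trans g₂_sqrt_three_eq_g₃_sqrt_three
  · have h1 : 1 < x := one_lt_sqrt_three.trans h2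
    rw [gHI, if_neg (by linarith), if_neg h1.not_ge, if_neg h2.not_ge, if_pos h3, g₃]

theorem eqOn_FHI_F₁ : EqOn FHI F₁ (Iic 1) := by
  intro x h1
  rw [FHI, if_pos (mem_Iic.1 h1), F₁]

theorem eqOn_FHI_F₂ : EqOn FHI F₂ (Icc 1 √3) := by
  rintro x ⟨h1, h2⟩
  obtain rfl | h1 := h1.eq_or_lt
  · exact (eqOn_FHI_F₁ (mem_Iic.2 le_rfl)).trans F₁_one_eq_F₂_one
  · rw [FHI, if_neg h1.not_ge, if_pos h2, F₂]

theorem eqOn_FHI_F₃ : EqOn FHI F₃ (Ici √3) := by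
  intro x h2
  obtain rfl | h2 := (mem_Ici.1 h2).eq_or_lt
  · exact (eqOn_FHI_F₂ ⟨one_lt_sqrt_three.le, le_rfl⟩).trans F₂_sqrt_three_eq_F₃_sqrt_three
  · rw [FHI, if_neg (one_lt_sqrt_three.trans h2).not_ge, if_neg h2.not_ge, F₃]

theorem hasDerivAt_F₁ (x : ℝ) : HasDerivAt F₁ (2/3 * x * g₁ x) x := by
  refine ((((hasDerivAt_pow 4 x).const_mul ((1/3) * (1/3 - π/(9*√3)))).sub
    ((hasDerivAt_pow 3 x).const_mul (16/27))).add
    ((hasDerivAt_pow 2 x).const_mul (2*π/(3*√3)))).congr_deriv ?_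
  simp only [g₁]
  push_cast
  field_simp
  ring

theorem hasDerivAt_F₂ {x : ℝ} (hx : 1 < x) : HasDerivAt F₂ (2/3 * x * g₂ x) x := by
  have hx2 : √3 < 2 * x := by linarith [sqrt_three_lt_two]
  have hr : 0 < 4 * x ^ 2 - 3 := by nlinarith
  have hA := (hasDerivAt_arcsin_div (by positivity) hx2).comp x ((hasDerivAt_id' x).const_mul 2)
  rw [show (2 * x) ^ 2 - √3 ^ 2 = 4 * x ^ 2 - 3 by rw [sq_sqrt zero_le_three]; ring] at hA
  have hS := (((hasDerivAt_pow 2 x).const_mul 4).sub_const 3).sqrt hr.ne'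
  refine (((((((((hasDerivAt_pow 4 x).div_const 3).add (hasDerivAt_pow 2 x)).const_mul
    (-(4/(3*√3)))).mul hA).add ((hasDerivAt_pow 4 x).const_mul (π/(9*√3)))).add
    ((hasDerivAt_pow 2 x).const_mul (10*π/(9*√3)))).sub
    (((((hasDerivAt_pow 2 x).const_mul 26).add_const 3).div_const 54).mul hS)).add_const
    (1/18)).congr_deriv ?_
  simp only [g₂, Function.comp_apply, Pi.add_apply]
  have hs : √(4 * x ^ 2 - 3) ^ 2 = 4 * x ^ 2 - 3 := sq_sqrt hr.le
  have : 0 < √(4 * x ^ 2 - 3) := sqrt_pos.2 hr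
  push_cast
  field_simp
  linear_combination (1620 * √3) * hs

theorem hasDerivAt_F₃ {x : ℝ} (hx : √3 < x) : HasDerivAt F₃ (2/3 * x * g₃ x) x := by
  have hr : 0 < x ^ 2 - 3 := by nlinarith [sq_sqrt zero_le_three, sqrt_nonneg 3]
  have hA := hasDerivAt_arcsin_div (by positivity) hx
  rw [sq_sqrt zero_le_three] at hA
  have hS := ((hasDerivAt_pow 2 x).sub_const 3).sqrt hr.ne'
  refine (((((((((hasDerivAt_pow 4 x).div_const 3).add
    ((hasDerivAt_pow 2 x).const_mul 8)).const_mul (2/(3*√3))).mul hA).sub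
    ((hasDerivAt_pow 4 x).const_mul (2*π/(27*√3) + 1/9))).sub
    ((hasDerivAt_pow 2 x).const_mul (16*π/(9*√3) + 4/3))).add
    (((((hasDerivAt_pow 2 x).const_mul 14).add_const 12).div_const 9).mul hS)).add_const
    (5/9)).congr_deriv ?_
  simp only [g₃, Pi.add_apply]
  have hs : √(x ^ 2 - 3) ^ 2 = x ^ 2 - 3 := sq_sqrt hr.le
  have : 0 < √(x ^ 2 - 3) := sqrt_pos.2 hr
  push_cast
  field_simp
  linear_combination (-2916 * x * √3) * hs

theorem continuousOn_g₂ : ContinuousOn g₂ (Ioi 0) := by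
  unfold g₂
  fun_prop (disch := intro x hx; rw [mem_Ioi] at hx; positivity)

theorem continuousOn_g₃ : ContinuousOn g₃ (Ioi 0) := by
  unfold g₃
  fun_prop (disch := intro x hx; rw [mem_Ioi] at hx; positivity)

theorem continuousOn_F₂ : ContinuousOn F₂ (Ioi 0) := by
  unfold F₂
  fun_prop (disch := intro x hx; rw [mem_Ioi] at hx; positivity)

theorem continuousOn_F₃ : ContinuousOn F₃ (Ioi 0) := by
  unfold F₃
  fun_prop (disch := intro x hx; rw [mem_Ioi] at hx; positivity)

theorem continuousOn_gHI : ContinuousOn gHI (Icc 0 2) := by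
  have h₁ : ContinuousOn g₁ (Icc 0 1) := by unfold g₁; fun_prop
  have h₂ := continuousOn_g₂.mono fun x (hx : x ∈ Icc 1 √3) => zero_lt_one.trans_le hx.1
  have h₃ := continuousOn_g₃.mono fun x (hx : x ∈ Icc √3 2) =>
    zero_lt_one.trans (one_lt_sqrt_three.trans_le hx.1)
  exact ((h₁.congr eqOn_gHI_g₁).Icc_union_Icc (h₂.congr eqOn_gHI_g₂) zero_le_one
    one_lt_sqrt_three.le).Icc_union_Icc (h₃.congr eqOn_gHI_g₃) (sqrt_nonneg 3)
    sqrt_three_lt_two.le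

theorem continuousOn_FHI : ContinuousOn FHI (Icc 0 2) := by
  have h₁ : ContinuousOn F₁ (Icc 0 1) := by unfold F₁; fun_prop
  have h₂ := continuousOn_F₂.mono fun x (hx : x ∈ Icc 1 √3) => zero_lt_one.trans_le hx.1
  have h₃ := continuousOn_F₃.mono fun x (hx : x ∈ Icc √3 2) =>
    zero_lt_one.trans (one_lt_sqrt_three.trans_le hx.1)
  exact ((h₁.congr (eqOn_FHI_F₁.mono Icc_subset_Iic_self)).Icc_union_Icc
    (h₂.congr eqOn_FHI_F₂) zero_le_one one_lt_sqrt_three.le).Icc_union_Icc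
    (h₃.congr (eqOn_FHI_F₃.mono Icc_subset_Ici_self)) (sqrt_nonneg 3) sqrt_three_lt_two.le

theorem hasDerivAt_FHI {x : ℝ} (hx : x ∈ Ioo 0 2 \ {1, √3}) : HasDerivAt FHI (fHI x) x := by
  obtain ⟨⟨h0, h2⟩, hx⟩ := hx
  simp only [mem_insert_iff, mem_singleton_iff, not_or] at hx
  have piece {G g : ℝ → ℝ} {a b : ℝ} (hab : x ∈ Ioo a b) (hG : EqOn FHI G (Icc a b))
      (hg : EqOn gHI g (Icc a b)) (hd : HasDerivAt G (2/3 * x * g x) x) :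
      HasDerivAt FHI (fHI x) x := by
    rw [fHI, hg (Ioo_subset_Icc_self hab)]
    exact hd.congr_of_eventuallyEq (hG.eventuallyEq_of_mem (Icc_mem_nhds hab.1 hab.2))
  rcases lt_or_gt_of_ne hx.1 with h1 | h1
  · exact piece ⟨h0, h1⟩ (eqOn_FHI_F₁.mono Icc_subset_Iic_self) eqOn_gHI_g₁ (hasDerivAt_F₁ x)
  rcases lt_or_gt_of_ne hx.2 with h3 | h3
  · exact piece ⟨h1, h3⟩ eqOn_FHI_F₂ eqOn_gHI_g₂ (hasDerivAt_F₂ h1)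
  · exact piece ⟨h3, h2⟩ (eqOn_FHI_F₃.mono Icc_subset_Ici_self) eqOn_gHI_g₃ (hasDerivAt_F₃ h3)

theorem integral_fHI {d : ℝ} (hd₀ : 0 ≤ d) (hd₂ : d ≤ 2) : ∫ x in (0:ℝ)..d, fHI x = FHI d := by
  have hf : ContinuousOn fHI (Icc 0 d) :=
    ((continuousOn_const.mul continuousOn_id).mul continuousOn_gHI).mono
      (Icc_subset_Icc_right hd₂)
  rw [integral_eq_of_hasDerivAt_off_countable_of_le FHI fHI hd₀ (toFinite _).countable
    (continuousOn_FHI.mono (Icc_subset_Icc_right hd₂))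
    (fun x hx => hasDerivAt_FHI ⟨Ioo_subset_Ioo_right hd₂ hx.1, hx.2⟩)
    (hf.intervalIntegrable_of_Icc hd₀), eqOn_FHI_F₁ (mem_Iic.2 zero_le_one), F₁_zero, sub_zero]

theorem FHI_two : FHI 2 = 1 := by
  rw [eqOn_FHI_F₃ (mem_Ici.2 sqrt_three_lt_two.le), F₃_two]

end HexagonDistance

/-- F_{H_I} is the antiderivative of f_{H_I} vanishing at 0, and f_{H_I} integrates
to 1 over [0,2]. -/
theorem stmt16 :
    (∀ d : ℝ, 0 ≤ d → d ≤ 2 → ∫ x in (0:ℝ)..d, fHI x = FHI d) ∧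
      ∫ x in (0:ℝ)..2, fHI x = 1 := by
  refine ⟨fun _ => HexagonDistance.integral_fHI, ?_⟩
  rw [HexagonDistance.integral_fHI zero_le_two le_rfl, HexagonDistance.FHI_two]
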